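/- Let n, m be nonnegative integers and a ∉ ℤ. Then the terminating series satisfies 2F1(-n, a; m+1; z) = (m!·(a)_n/(m+n)!) · (-z)^{-m}(1-z)^{m+n} · 2F1(-m-n, 1-a; 1-n-a; 1/(1-z)), as an identity of functions of z on a suitable domain. -/

import Mathlib

open Finset

noncomputable def poch (x : ℂ) (k : ℕ) : ℂ := (ascPochhammer ℂ k).eval x

/-- Terminating Gauss hypergeometric series `2F1(-n, b; c; z)` as a finite sum. -/
noncomputable def hyp (n : ℕ) (b c : ℂ) (z : ℂ) : ℂ :=
  ∑ k ∈ Finset.range (n + 1),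
    poch (-(n : ℂ)) k * poch b k / (poch c k * (Nat.factorial k : ℂ)) * z ^ k

/-!
With `w = 1 / (1 - z)`, multiplying `(1 - z) ^ (m + n)` into `2F1(-m-n, 1-a; 1-n-a; w)` turns
its `k`-th term into a multiple of `(1 - z) ^ (m + n - k)`. Expanding these powers binomially
and exchanging the sums, the coefficient of `(-z) ^ j` becomes `C(m+n, j)` times a terminating
series at argument `1`, which Chu–Vandermonde evaluates as `(-n)_(m+n-j) / (1-n-a)_(m+n-j)`.
This vanishes for `j < m`, and for `j = m + i` the reflection `(1-x-k)_k = (-1)^k (x)_k`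
identifies it with the `i`-th coefficient of `2F1(-n, a; m+1; z)`, up to the prefactor.
-/

open Nat Polynomial

theorem Nat.descFactorial_mul_choose_sub (n k j : ℕ) :
    n.descFactorial k * (n - k).choose j = n.choose j * (n - j).descFactorial k := by
  apply Nat.eq_of_mul_eq_mul_right j.factorial_pos
  calc n.descFactorial k * (n - k).choose j * j !
      = (n - k).descFactorial (k + j - k) * n.descFactorial k := by
        rw [Nat.add_sub_cancel_left, descFactorial_eq_factorial_mul_choose (n - k) j]; ring
    _ = (n - j).descFactorial (j + k - j) * n.descFactorial j := by
        rw [descFactorial_mul_descFactorial (le_add_right _ _),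
          descFactorial_mul_descFactorial (le_add_right _ _), add_comm]
    _ = n.choose j * (n - j).descFactorial k * j ! := by
        rw [Nat.add_sub_cancel_left, descFactorial_eq_factorial_mul_choose n j]; ring

lemma poch_add (x : ℂ) (p q : ℕ) : poch x (p + q) = poch x p * poch (x + p) q := by
  simp [poch, ← ascPochhammer_mul, eval_comp]

lemma poch_ne_zero_of_le {x : ℂ} {k N : ℕ} (h : k ≤ N) (hN : poch x N ≠ 0) :
    poch x k ≠ 0 := by
  obtain ⟨d, rfl⟩ := Nat.exists_eq_add_of_le h
  exact left_ne_zero_of_mul (poch_add x k d ▸ hN)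

lemma poch_ne_zero {x : ℂ} (hx : ∀ j : ℤ, x ≠ j) (k : ℕ) : poch x k ≠ 0 := by
  intro h
  obtain ⟨j, -, hj⟩ := (ascPochhammer_eval_eq_zero_iff k x).1 h
  exact hx (-j) (by push_cast; linear_combination hj)

lemma poch_neg_natCast (N k : ℕ) : poch (-N) k = (-1) ^ k * N.descFactorial k := by
  rw [poch, ascPochhammer_eval_neg_eq_descPochhammer, descPochhammer_eval_eq_descFactorial]

lemma poch_neg_natCast_of_lt {N k : ℕ} (h : N < k) : poch (-N) k = 0 :=
  ascPochhammer_eval_neg_coe_nat_of_lt h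

lemma factorial_mul_poch_natCast_add_one (m i : ℕ) :
    (m ! : ℂ) * poch ((m : ℂ) + 1) i = ((m + i)! : ℂ) :=
  factorial_mul_ascPochhammer ℂ m i

lemma poch_one_sub_sub (x : ℂ) (k : ℕ) : poch (1 - x - k) k = (-1) ^ k * poch x k := by
  have h := ascPochhammer_eval_neg_eq_descPochhammer ℂ (x + (k : ℂ) - 1) k
  rw [descPochhammer_eval_eq_ascPochhammer, show x + k - 1 - k + 1 = x by ring] at h
  rw [show 1 - x - k = -(x + k - 1) by ring]
  exact h

lemma descPochhammer_smeval_eq_poch (r : ℂ) (k : ℕ) :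
    (descPochhammer ℤ k).smeval r = poch (r - k + 1) k := by
  rw [← aeval_eq_smeval, aeval_def, eval₂_eq_eval_map, descPochhammer_map,
    descPochhammer_eval_eq_ascPochhammer, poch]

-- Chu–Vandermonde: Mathlib's falling-factorial form at `-b` and `c + N - 1`.
lemma poch_sub_eq_sum (N : ℕ) (b c : ℂ) :
    poch (c - b) N =
      ∑ k ∈ range (N + 1), (-1) ^ k * N.choose k * poch b k * poch (c + k) (N - k) := by
  have h := Ring.descPochhammer_smeval_add N (Commute.all (-b) (c + N - 1))
  rw [Finset.Nat.sum_antidiagonal_eq_sum_range_succ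
    (fun i j => (N.choose i : ℂ) * ((descPochhammer ℤ i).smeval (-b) *
      (descPochhammer ℤ j).smeval (c + N - 1)))] at h
  simp only [descPochhammer_smeval_eq_poch] at h
  convert h using 1
  · ring_nf
  · refine sum_congr rfl fun k hk => ?_
    have hk : k ≤ N := Nat.lt_succ_iff.1 (mem_range.1 hk)
    rw [Nat.cast_sub hk, show -b - k + 1 = 1 - b - k by ring, poch_one_sub_sub]
    ring_nf

theorem hyp_one (N : ℕ) (b c : ℂ) (hc : poch c N ≠ 0) :
    hyp N b c 1 = poch (c - b) N / poch c N := by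
  rw [eq_div_iff hc, poch_sub_eq_sum, hyp, sum_mul]
  refine sum_congr rfl fun k hk => ?_
  have hk : k ≤ N := Nat.lt_succ_iff.1 (mem_range.1 hk)
  have hck : poch c k ≠ 0 := poch_ne_zero_of_le hk hc
  have hkf : (k ! : ℂ) ≠ 0 := by exact_mod_cast k.factorial_ne_zero
  rw [show poch c N = poch c k * poch (c + k) (N - k) by rw [← poch_add, Nat.add_sub_cancel' hk],
    poch_neg_natCast, descFactorial_eq_factorial_mul_choose]
  field_simp
  push_cast
  ring

lemma hyp_eq_sum_range {N K : ℕ} (h : N ≤ K) (b c z : ℂ) :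
    hyp N b c z = ∑ k ∈ range (K + 1),
      poch (-(N : ℂ)) k * poch b k / (poch c k * (k ! : ℂ)) * z ^ k := by
  refine sum_subset (range_subset_range.2 (by omega)) fun k _ hk => ?_
  rw [poch_neg_natCast_of_lt (by simpa using hk)]
  simp

lemma one_add_pow_eq_sum_range {R : Type*} [CommSemiring R] (x : R) {N K : ℕ} (h : N ≤ K) :
    (1 + x) ^ N = ∑ j ∈ range (K + 1), N.choose j * x ^ j := by
  rw [add_comm, add_pow]
  refine sum_subset (range_subset_range.2 (by omega)) (fun j _ hj => ?_) |>.trans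
    (sum_congr rfl fun j _ => by ring)
  rw [Nat.choose_eq_zero_of_lt (by simpa using hj)]
  simp

lemma sum_hyp_coeff_mul_choose (M j : ℕ) (b c : ℂ) :
    ∑ k ∈ range (M + 1),
        poch (-(M : ℂ)) k * poch b k / (poch c k * (k ! : ℂ)) * (M - k).choose j =
      M.choose j * hyp (M - j) b c 1 := by
  rw [hyp_eq_sum_range (Nat.sub_le M j), mul_sum]
  refine sum_congr rfl fun k _ => ?_
  have h := congrArg (Nat.cast : ℕ → ℂ) (Nat.descFactorial_mul_choose_sub M k j)
  push_cast at h
  rw [poch_neg_natCast, poch_neg_natCast, one_pow, mul_one]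
  linear_combination ((-1) ^ k * poch b k / (poch c k * k !)) * h

theorem one_sub_pow_mul_hyp_one_div_one_sub (M : ℕ) (b c : ℂ) {z : ℂ} (hz : z ≠ 1) :
    (1 - z) ^ M * hyp M b c (1 / (1 - z)) =
      ∑ j ∈ range (M + 1), M.choose j * hyp (M - j) b c 1 * (-z) ^ j := by
  have hz' : 1 - z ≠ 0 := sub_ne_zero.2 hz.symm
  calc (1 - z) ^ M * hyp M b c (1 / (1 - z))
      = ∑ k ∈ range (M + 1),
          poch (-(M : ℂ)) k * poch b k / (poch c k * (k ! : ℂ)) * (1 + -z) ^ (M - k) := by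
        rw [hyp, mul_sum]
        refine sum_congr rfl fun k hk => ?_
        rw [← sub_eq_add_neg, one_div, inv_pow,
          pow_sub₀ _ hz' (Nat.lt_succ_iff.1 (mem_range.1 hk))]
        ring
    _ = ∑ k ∈ range (M + 1), ∑ j ∈ range (M + 1),
          poch (-(M : ℂ)) k * poch b k / (poch c k * (k ! : ℂ)) * (M - k).choose j *
            (-z) ^ j := by
        refine sum_congr rfl fun k _ => ?_
        rw [one_add_pow_eq_sum_range _ (Nat.sub_le M k), mul_sum]
        exact sum_congr rfl fun j _ => by ring
    _ = _ := by
        rw [sum_comm]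
        exact sum_congr rfl fun j _ => by rw [← sum_mul, sum_hyp_coeff_mul_choose]

lemma hyp_one_one_sub_sub (a : ℂ) (i d : ℕ) (ha : poch (a + i) d ≠ 0) :
    hyp d (1 - a) (1 - ((i + d : ℕ) : ℂ) - a) 1 = (i + d).descFactorial d / poch (a + i) d := by
  have hrefl : poch (1 - ((i + d : ℕ) : ℂ) - a) d = (-1) ^ d * poch (a + i) d := by
    rw [← poch_one_sub_sub]; congr 1; push_cast; ring
  rw [hyp_one _ _ _ (hrefl ▸ mul_ne_zero (by simp) ha), hrefl,
    show 1 - ((i + d : ℕ) : ℂ) - a - (1 - a) = -((i + d : ℕ) : ℂ) by ring, poch_neg_natCast]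
  field_simp

lemma choose_mul_hyp_one_eq (m n i : ℕ) (a : ℂ) (hi : i ≤ n) (ha : poch a n ≠ 0) :
    (m ! : ℂ) * poch a n / ((m + n)! : ℂ) *
        ((m + n).choose (m + i) * hyp (n - i) (1 - a) (1 - n - a) 1) =
      (-1) ^ i * (poch (-(n : ℂ)) i * poch a i / (poch ((m : ℂ) + 1) i * (i ! : ℂ))) := by
  obtain ⟨d, rfl⟩ := Nat.exists_eq_add_of_le hi
  rw [poch_add] at ha ⊢
  have hd : poch (a + i) d ≠ 0 := right_ne_zero_of_mul ha
  rw [Nat.add_sub_cancel_left, hyp_one_one_sub_sub a i d hd,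
    poch_neg_natCast, ← add_assoc]
  have h1 := factorial_mul_poch_natCast_add_one m i
  have h2 : ((m + i + d).choose (m + i) : ℂ) * (m + i)! * d ! = (m + i + d)! := by
    norm_cast; simpa using Nat.choose_mul_factorial_mul_factorial (Nat.le_add_right (m + i) d)
  have h3 : (d ! : ℂ) * (i + d).descFactorial i = (i + d)! := by
    norm_cast; simpa using Nat.factorial_mul_descFactorial (Nat.le_add_right i d)
  have h4 : (i ! : ℂ) * (i + d).descFactorial d = (i + d)! := by
    norm_cast; simpa using Nat.factorial_mul_descFactorial (Nat.le_add_left d i)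
  have hm : poch ((m : ℂ) + 1) i ≠ 0 := by
    refine right_ne_zero_of_mul (a := (m ! : ℂ)) ?_
    rw [h1]; exact_mod_cast (m + i).factorial_ne_zero
  have hF : ((m + i + d)! : ℂ) ≠ 0 := by exact_mod_cast (m + i + d).factorial_ne_zero
  have hi : (i ! : ℂ) ≠ 0 := by exact_mod_cast i.factorial_ne_zero
  field_simp
  rw [← pow_mul, pow_mul', neg_one_sq, one_pow, mul_one]
  linear_combination poch a i * ((m + i + d).choose (m + i) : ℂ) *
      (((i + d).descFactorial d : ℂ) * i ! * h1 + (m + i)! * (h4 - h3)) +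
    poch a i * ((i + d).descFactorial i : ℂ) * h2

theorem terminating_extra_transform_one (n m : ℕ) (a : ℂ) (ha : ∀ j : ℤ, a ≠ (j : ℂ))
    (z : ℂ) (hz0 : z ≠ 0) (hz1 : z ≠ 1) :
    hyp n a ((m : ℂ) + 1) z =
      (Nat.factorial m : ℂ) * poch a n / (Nat.factorial (m + n) : ℂ) *
        ((-z) ^ (-(m : ℤ)) * (1 - z) ^ (m + n)) *
        hyp (m + n) (1 - a) (1 - n - a) (1 / (1 - z)) := by
  have hc : ∀ k, poch (1 - n - a) k ≠ 0 :=
    poch_ne_zero fun j h => ha (1 - n - j) (by push_cast; linear_combination -h)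
  have hvanish : ∀ j < m, hyp (m + n - j) (1 - a) (1 - n - a) 1 = 0 := fun j hj => by
    rw [hyp_one _ _ _ (hc _), show (1 - n - a - (1 - a) : ℂ) = -n by ring,
      poch_neg_natCast_of_lt (by omega), zero_div]
  rw [mul_assoc, mul_assoc, one_sub_pow_mul_hyp_one_div_one_sub _ _ _ hz1, add_assoc,
    sum_range_add, sum_eq_zero fun j hj => by rw [hvanish j (mem_range.1 hj), mul_zero, zero_mul],
    zero_add, mul_sum, mul_sum, hyp]
  refine sum_congr rfl fun i hi => ?_
  have key := choose_mul_hyp_one_eq m n i a (Nat.lt_succ_iff.1 (mem_range.1 hi)) (poch_ne_zero ha n)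
  have hzm : (-z) ^ m ≠ 0 := pow_ne_zero m (neg_ne_zero.2 hz0)
  rw [show m + n - (m + i) = n - i by omega, zpow_neg, zpow_natCast, pow_add]
  calc poch (-(n : ℂ)) i * poch a i / (poch ((m : ℂ) + 1) i * (i ! : ℂ)) * z ^ i
      = (-1) ^ i * (poch (-(n : ℂ)) i * poch a i / (poch ((m : ℂ) + 1) i * (i ! : ℂ))) *
          (-z) ^ i := by
        rw [mul_comm ((-1) ^ i), mul_assoc, ← mul_pow]; simp
    _ = _ := by rw [← key]; field_simp
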